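/- arXiv:2503.09449 — 2 statements merged into one kernel-verified Lean document; each statement's English description precedes it below -/
import Mathlib

section
/- Let K be a tensor of order T with K_{i_1,...,i_T} = Π_{t=1}^T k^t_{i_t} · Π_{t=1}^{T-1} k̂_{i_t, i_{t+1}} for vectors k^t and matrices k̂ with nonnegative entries, and let u^t be positive vectors. Define the scaled tensor M_{i_1,...,i_T} = K_{i_1,...,i_T} · Π_t u^t_{i_t}. Then for each τ, the τ-th marginal P_τ(M)_{i_τ} := Σ_{i_1,...,i_T except i_τ} M_{i_1,...,i_T} factorizes as P_τ(M)_{i_τ} = Φ→^τ_{i_τ} · k^τ_{i_τ} · u^τ_{i_τ} · Φ←^τ_{i_τ}, where Φ→^1 ≡ 1, Φ→^τ_{i} = Σ_j Φ→^{τ−1}_j · k^{τ−1}_j · k̂_{j,i} · u^{τ−1}_j, and Φ←^T ≡ 1, Φ←^τ_{i} = Σ_j Φ←^{τ+1}_j · k^{τ+1}_j · k̂_{i,j} · u^{τ+1}_j. -/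
/-!
With `W t = k t * u t`, the entry `M x` is the weight of the path `x 0, …, x T` in a chain with
node weights `W` and edge weights `khat`. Put an arbitrary initial vector `Φf 0` in front of that
weight. Summing out the first coordinate then leaves a chain one step shorter whose initial vector
is `Φf 1`, so induction on the length reduces every marginal to the marginal at the first
coordinate. The same peeling, driven by the backward recursion, evaluates that one as
`Φf 0 i * W 0 i * Φb 0 i`.
-/

open Finset

namespace PathChain

variable {ι R : Type*} [CommSemiring R]

def chainWeight {n : ℕ} (W : Fin (n + 1) → ι → R) (A : ι → ι → R) (x : Fin (n + 1) → ι) : R :=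
  (∏ t, W t (x t)) * ∏ t : Fin n, A (x t.castSucc) (x t.succ)

lemma chainWeight_cons {n : ℕ} (W : Fin (n + 2) → ι → R) (A : ι → ι → R) (j : ι)
    (y : Fin (n + 1) → ι) :
    chainWeight W A (Fin.cons j y) = W 0 j * A j (y 0) * chainWeight (fun t => W t.succ) A y := by
  simp only [chainWeight, Fin.prod_univ_succ (n := n + 1), Fin.prod_univ_succ (n := n),
    Fin.cons_zero, Fin.cons_succ, Fin.castSucc_zero, Fin.succ_zero_eq_one, ← Fin.succ_castSucc]
  ring

variable [Fintype ι]

lemma sum_pi_fin_succ {n : ℕ} (f : (Fin (n + 1) → ι) → R) :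
    ∑ x, f x = ∑ j, ∑ y, f (Fin.cons j y) :=
  (Fintype.sum_equiv (Fin.consEquiv fun _ => ι) _ _ fun _ => rfl).symm.trans
    (Fintype.sum_prod_type _)

variable [DecidableEq ι]

lemma sum_filter_apply_zero_eq {n : ℕ} (f : (Fin (n + 1) → ι) → R) (i : ι) :
    ∑ x ∈ univ.filter (fun x => x 0 = i), f x = ∑ y, f (Fin.cons i y) := by
  simp [sum_filter, sum_pi_fin_succ]

lemma sum_filter_apply_succ_eq {n : ℕ} (f : (Fin (n + 1) → ι) → R) (σ : Fin n) (i : ι) :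
    ∑ x ∈ univ.filter (fun x => x σ.succ = i), f x
      = ∑ j, ∑ y ∈ univ.filter (fun y => y σ = i), f (Fin.cons j y) := by
  simp [sum_filter, sum_pi_fin_succ]

lemma sum_filter_apply_zero_mul_chainWeight {n : ℕ} (W : Fin (n + 1) → ι → R) (A : ι → ι → R)
    (Φb : Fin (n + 1) → ι → R) (hΦb_last : ∀ i, Φb (Fin.last n) i = 1)
    (hΦb : ∀ t : Fin n, ∀ i, Φb t.castSucc i = ∑ j, Φb t.succ j * W t.succ j * A i j)
    (g : ι → R) (i : ι) :
    ∑ x ∈ univ.filter (fun x => x 0 = i), g (x 0) * chainWeight W A x = g i * W 0 i * Φb 0 i := by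
  induction n generalizing g i with
  | zero => simp [sum_filter_apply_zero_eq, chainWeight, show Φb 0 i = 1 from hΦb_last i]
  | succ m ih =>
    have hΦb_zero := hΦb 0 i
    rw [Fin.castSucc_zero, Fin.succ_zero_eq_one] at hΦb_zero
    calc ∑ x ∈ univ.filter (fun x => x 0 = i), g (x 0) * chainWeight W A x
        = g i * W 0 i * ∑ y, A i (y 0) * chainWeight (fun t => W t.succ) A y := by
          rw [sum_filter_apply_zero_eq, mul_sum]
          exact sum_congr rfl fun y _ => by rw [Fin.cons_zero, chainWeight_cons]; ring
      _ = g i * W 0 i * ∑ j, A i j * W 1 j * Φb 1 j := by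
          rw [← sum_fiberwise univ (fun y : Fin (m + 1) → ι => y 0)]
          exact congrArg _ (sum_congr rfl fun j _ =>
            ih (fun t => W t.succ) (fun t => Φb t.succ) hΦb_last
              (fun t i => by rw [Fin.succ_castSucc]; exact hΦb t.succ i) (A i) j)
      _ = g i * W 0 i * Φb 0 i := by
          rw [hΦb_zero]
          exact congrArg _ (sum_congr rfl fun j _ => by ring)

lemma sum_filter_apply_mul_chainWeight {n : ℕ} (W : Fin (n + 1) → ι → R) (A : ι → ι → R)
    (Φf Φb : Fin (n + 1) → ι → R)
    (hΦf : ∀ t : Fin n, ∀ i, Φf t.succ i = ∑ j, Φf t.castSucc j * W t.castSucc j * A j i)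
    (hΦb_last : ∀ i, Φb (Fin.last n) i = 1)
    (hΦb : ∀ t : Fin n, ∀ i, Φb t.castSucc i = ∑ j, Φb t.succ j * W t.succ j * A i j)
    (τ : Fin (n + 1)) (i : ι) :
    ∑ x ∈ univ.filter (fun x => x τ = i), Φf 0 (x 0) * chainWeight W A x
      = Φf τ i * W τ i * Φb τ i := by
  induction n with
  | zero =>
    rw [Fin.fin_one_eq_zero τ]
    exact sum_filter_apply_zero_mul_chainWeight W A Φb hΦb_last hΦb _ i
  | succ m ih =>
    cases τ using Fin.cases with
    | zero => exact sum_filter_apply_zero_mul_chainWeight W A Φb hΦb_last hΦb _ i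
    | succ σ =>
      have hΦf_one := hΦf 0
      rw [Fin.castSucc_zero, Fin.succ_zero_eq_one] at hΦf_one
      calc ∑ x ∈ univ.filter (fun x => x σ.succ = i), Φf 0 (x 0) * chainWeight W A x
          = ∑ y ∈ univ.filter (fun y : Fin (m + 1) → ι => y σ = i),
              Φf 1 (y 0) * chainWeight (fun t => W t.succ) A y := by
            rw [sum_filter_apply_succ_eq, sum_comm]
            refine sum_congr rfl fun y _ => ?_
            simp only [Fin.cons_zero, chainWeight_cons, hΦf_one, sum_mul]
            exact sum_congr rfl fun j _ => by ring
        _ = Φf σ.succ i * W σ.succ i * Φb σ.succ i :=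
          ih (fun t => W t.succ) (fun t => Φf t.succ) (fun t => Φb t.succ)
            (fun t i => by rw [Fin.succ_castSucc]; exact hΦf t.succ i) hΦb_last
            (fun t i => by rw [Fin.succ_castSucc]; exact hΦb t.succ i) σ

end PathChain

open PathChain in
theorem path_structured_marginal_general (T : ℕ) (ι : Type*) [Fintype ι] [DecidableEq ι]
    (k : Fin (T + 1) → ι → ℝ) (khat : ι → ι → ℝ) (u : Fin (T + 1) → ι → ℝ)
    (K M : (Fin (T + 1) → ι) → ℝ)
    (hK : ∀ x, K x = (∏ t, k t (x t)) * ∏ t : Fin T, khat (x t.castSucc) (x t.succ))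
    (hM : ∀ x, M x = K x * ∏ t, u t (x t))
    (Φf Φb : Fin (T + 1) → ι → ℝ)
    (hΦf0 : ∀ i, Φf 0 i = 1)
    (hΦf : ∀ t : Fin T, ∀ i,
      Φf t.succ i = ∑ j, Φf t.castSucc j * k t.castSucc j * khat j i * u t.castSucc j)
    (hΦbT : ∀ i, Φb (Fin.last T) i = 1)
    (hΦb : ∀ t : Fin T, ∀ i,
      Φb t.castSucc i = ∑ j, Φb t.succ j * k t.succ j * khat i j * u t.succ j) :
    ∀ (τ : Fin (T + 1)) (i : ι),
      (∑ x ∈ Finset.univ.filter (fun x : Fin (T + 1) → ι => x τ = i), M x)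
        = Φf τ i * k τ i * u τ i * Φb τ i := by
  intro τ i
  set W : Fin (T + 1) → ι → ℝ := fun t i => k t i * u t i
  have hM_chain : ∀ x, M x = Φf 0 (x 0) * chainWeight W khat x := fun x => by
    rw [hM, hK, hΦf0, chainWeight, prod_mul_distrib]
    ring
  simp_rw [hM_chain]
  calc ∑ x ∈ univ.filter (fun x => x τ = i), Φf 0 (x 0) * chainWeight W khat x
      = Φf τ i * W τ i * Φb τ i :=
        sum_filter_apply_mul_chainWeight W khat Φf Φb
          (fun t i => by rw [hΦf]; exact sum_congr rfl fun j _ => by ring) hΦbT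
          (fun t i => by rw [hΦb]; exact sum_congr rfl fun j _ => by ring) τ i
    _ = Φf τ i * k τ i * u τ i * Φb τ i := by ring

theorem path_structured_marginal (T : ℕ) (ι : Type*) [Fintype ι] [DecidableEq ι]
    (k : Fin (T + 1) → ι → ℝ) (khat : ι → ι → ℝ) (u : Fin (T + 1) → ι → ℝ)
    (hk : ∀ t i, 0 ≤ k t i) (hkhat : ∀ i j, 0 ≤ khat i j) (hu : ∀ t i, 0 < u t i)
    (K M : (Fin (T + 1) → ι) → ℝ)
    (hK : ∀ x, K x = (∏ t, k t (x t)) * ∏ t : Fin T, khat (x t.castSucc) (x t.succ))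
    (hM : ∀ x, M x = K x * ∏ t, u t (x t))
    (Φf Φb : Fin (T + 1) → ι → ℝ)
    (hΦf0 : ∀ i, Φf 0 i = 1)
    (hΦf : ∀ t : Fin T, ∀ i,
      Φf t.succ i = ∑ j, Φf t.castSucc j * k t.castSucc j * khat j i * u t.castSucc j)
    (hΦbT : ∀ i, Φb (Fin.last T) i = 1)
    (hΦb : ∀ t : Fin T, ∀ i,
      Φb t.castSucc i = ∑ j, Φb t.succ j * k t.succ j * khat i j * u t.succ j) :
    ∀ (τ : Fin (T + 1)) (i : ι),
      (∑ x ∈ Finset.univ.filter (fun x : Fin (T + 1) → ι => x τ = i), M x)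
        = Φf τ i * k τ i * u τ i * Φb τ i :=
  path_structured_marginal_general T ι k khat u K M hK hM Φf Φb hΦf0 hΦf hΦbT hΦb
end

section
/- Let F be the (m+1)(n+1) × (m+1)(n+1) switching-cost matrix defined by F_{(i,j),(k,l)} = (γ^p/2)·(1 − δ_{ik}δ_{jl})·[(1 − δ_{k,m+1})(1 − δ_{l,n+1}) + (1 − δ_{i,m+1})(1 − δ_{j,n+1})] when i = k, and +∞ otherwise. Then for any nonnegative matrix Q indexed by pairs ((i,j),(k,l)) with finite inner product ⟨F, Q⟩, writing a_{(i,j)} = Σ_{(k,l)} Q_{(i,j),(k,l)} (row sums) and b_{(k,l)} = Σ_{(i,j)} Q_{(i,j),(k,l)} (column sums), one has ⟨F, Q⟩ ≥ (γ^p/2)·Σ_{i=1}^m Σ_{j=1}^n [ a_{(i,j)} + b_{(i,j)} − 2·Q_{(i,j),(i,j)} ]. -/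
open Finset

private lemma row_sum (n : ℕ) (g : Fin (n+1) → ℝ) :
    ∑ j, (if j = Fin.last n then (0:ℝ) else 1) * g j = ∑ j : Fin n, g j.castSucc := by
  rw [Fin.sum_univ_castSucc (f := fun j => (if j = Fin.last n then (0:ℝ) else 1) * g j)]
  simp [(Fin.castSucc_lt_last _).ne]

private lemma chi_sum (m n : ℕ) (f : Fin (m+1) × Fin (n+1) → ℝ) :
    ∑ r : Fin (m+1) × Fin (n+1),
      (if r.1 = Fin.last m then (0:ℝ) else 1) * (if r.2 = Fin.last n then (0:ℝ) else 1) * f r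
      = ∑ i : Fin m, ∑ j : Fin n, f (i.castSucc, j.castSucc) := by
  rw [Fintype.sum_prod_type]
  calc ∑ i : Fin (m+1), ∑ j : Fin (n+1),
        (if i = Fin.last m then (0:ℝ) else 1) * (if j = Fin.last n then (0:ℝ) else 1) * f (i, j)
      = ∑ i : Fin (m+1), (if i = Fin.last m then (0:ℝ) else 1) *
          ∑ j : Fin (n+1), (if j = Fin.last n then (0:ℝ) else 1) * f (i, j) := by
        refine Finset.sum_congr rfl fun i _ => ?_
        rw [Finset.mul_sum]
        exact Finset.sum_congr rfl fun j _ => (mul_assoc _ _ _)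
    _ = ∑ i : Fin m, ∑ j : Fin (n+1), (if j = Fin.last n then (0:ℝ) else 1) * f (i.castSucc, j) :=
        row_sum m _
    _ = ∑ i : Fin m, ∑ j : Fin n, f (i.castSucc, j.castSucc) :=
        Finset.sum_congr rfl fun i _ => row_sum n _

private lemma diag_sum {α : Type*} [Fintype α] [DecidableEq α] (g : α → ℝ) (q : α) :
    ∑ x, (if x = q then (0:ℝ) else 1) * g x = (∑ x, g x) - g q := by
  have : ∀ x, (if x = q then (0:ℝ) else 1) * g x = g x - (if x = q then g x else 0) := by
    intro x; by_cases h : x = q <;> simp [h]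
  simp only [this, Finset.sum_sub_distrib, Finset.sum_ite_eq' Finset.univ q g,
    Finset.mem_univ, if_pos]

theorem switching_cost_inequality (m n : ℕ) (γ pexp : ℝ) (hγ : 0 < γ) (hp : 1 ≤ pexp)
    (Q : (Fin (m + 1) × Fin (n + 1)) → (Fin (m + 1) × Fin (n + 1)) → ℝ)
    (hQpos : ∀ p q, 0 ≤ Q p q)
    -- finiteness of ⟨F, Q⟩ forces Q to vanish whenever i ≠ k (F is +∞ there)
    (hQfin : ∀ p q : Fin (m + 1) × Fin (n + 1), p.1 ≠ q.1 → Q p q = 0)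
    (F : (Fin (m + 1) × Fin (n + 1)) → (Fin (m + 1) × Fin (n + 1)) → ℝ)
    (hF : ∀ p q : Fin (m + 1) × Fin (n + 1), p.1 = q.1 →
      F p q = γ ^ pexp / 2 * ((if p = q then 0 else 1) *
        ((if q.1 = Fin.last m then 0 else 1) * (if q.2 = Fin.last n then 0 else 1) +
         (if p.1 = Fin.last m then 0 else 1) * (if p.2 = Fin.last n then 0 else 1))))
    (a b : (Fin (m + 1) × Fin (n + 1)) → ℝ)
    (ha : ∀ p, a p = ∑ q, Q p q)
    (hb : ∀ q, b q = ∑ p, Q p q) :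
    (∑ p, ∑ q, F p q * Q p q) ≥
      γ ^ pexp / 2 * ∑ i : Fin m, ∑ j : Fin n,
        (a (i.castSucc, j.castSucc) + b (i.castSucc, j.castSucc)
          - 2 * Q (i.castSucc, j.castSucc) (i.castSucc, j.castSucc)) := by
  set c : ℝ := γ ^ pexp / 2 with hc
  set χ : Fin (m+1) × Fin (n+1) → ℝ := fun r =>
    (if r.1 = Fin.last m then (0:ℝ) else 1) * (if r.2 = Fin.last n then (0:ℝ) else 1) with hχ
  have key : ∀ p q, F p q * Q p q
      = c * ((if p = q then (0:ℝ) else 1) * Q p q * χ q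
           + (if p = q then (0:ℝ) else 1) * Q p q * χ p) := by
    intro p q
    by_cases h : p.1 = q.1
    · rw [hF p q h, hχ]; ring
    · rw [hQfin p q h]; ring
  apply ge_of_eq
  calc ∑ p, ∑ q, F p q * Q p q
      = c * ∑ p, ∑ q, ((if p = q then (0:ℝ) else 1) * Q p q * χ q
           + (if p = q then (0:ℝ) else 1) * Q p q * χ p) := by
        simp only [key, ← Finset.mul_sum]
    _ = c * ((∑ q, χ q * ∑ p, (if p = q then (0:ℝ) else 1) * Q p q)
           + (∑ p, χ p * ∑ q, (if q = p then (0:ℝ) else 1) * Q p q)) := by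
        congr 1
        simp only [Finset.sum_add_distrib]
        congr 1
        · rw [Finset.sum_comm]
          refine Finset.sum_congr rfl fun q _ => ?_
          rw [Finset.mul_sum]
          exact Finset.sum_congr rfl fun p _ => by ring
        · refine Finset.sum_congr rfl fun p _ => ?_
          rw [Finset.mul_sum]
          refine Finset.sum_congr rfl fun q _ => ?_
          by_cases h : p = q
          · simp [h]
          · rw [if_neg h, if_neg (Ne.symm h)]; ring
    _ = c * ((∑ q, χ q * (b q - Q q q)) + (∑ p, χ p * (a p - Q p p))) := by
        congr 1
        congr 1
        · exact Finset.sum_congr rfl fun q _ => by rw [diag_sum (fun p => Q p q) q, hb]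
        · exact Finset.sum_congr rfl fun p _ => by rw [diag_sum (fun q => Q p q) p, ha]
    _ = c * ∑ i : Fin m, ∑ j : Fin n,
        (a (i.castSucc, j.castSucc) + b (i.castSucc, j.castSucc)
          - 2 * Q (i.castSucc, j.castSucc) (i.castSucc, j.castSucc)) := by
        congr 1
        have h1 := chi_sum m n (fun q => b q - Q q q)
        have h2 := chi_sum m n (fun p => a p - Q p p)
        simp only [hχ]
        rw [h1, h2, ← Finset.sum_add_distrib]
        refine Finset.sum_congr rfl fun i _ => ?_
        rw [← Finset.sum_add_distrib]
        exact Finset.sum_congr rfl fun j _ => by ring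
end
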